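/- arXiv:1809.08185 — 8 statements merged into one kernel-verified Lean document; each statement's English description precedes it below -/
import Mathlib

section
/- Let K⁰_{n,n} be the complete bipartite graph on vertex sets {b_0,...,b_{n-1}} and {c_0,...,c_{n-1}} with the edge (b_0,c_0) removed. If π is an orthogonal representation of K⁰_{n,n} into an inner product space H with dim H ≤ 2(n-1), then at least one of the following holds: (1) the span of {π(b_i) : i=1,...,n-1} has dimension < n-1; (2) the span of {π(c_i) : i=1,...,n-1} has dimension < n-1; (3) π(b_0) is orthogonal to π(c_0). -/
/-!
The spans `B` of `π(b₁), …, π(bₙ₋₁)` and `C` of `π(c₁), …, π(cₙ₋₁)` are orthogonal. If both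
have dimension `n - 1`, then `dim B + dim C ≥ dim H`, so `C = Bᗮ` and `B = Cᗮ`. Now `π(b₀) ⟂ C`
puts `π(b₀)` in `B`, while `π(c₀) ⟂ B`, hence `π(b₀) ⟂ π(c₀)`.
-/

open scoped InnerProductSpace

namespace Submodule

variable {𝕜 E : Type*} [RCLike 𝕜] [NormedAddCommGroup E] [InnerProductSpace 𝕜 E]

theorem mem_orthogonal_span_range {ι : Type*} {v : ι → E} {x : E}
    (h : ∀ i, ⟪v i, x⟫_𝕜 = 0) : x ∈ (span 𝕜 (Set.range v))ᗮ := by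
  refine (isOrtho_span.2 ?_).ge (mem_span_singleton_self x)
  rintro _ ⟨i, rfl⟩ _ rfl
  exact h i

variable [FiniteDimensional 𝕜 E]

theorem IsOrtho.eq_orthogonal_of_finrank_le {B C : Submodule 𝕜 E} (hBC : B ⟂ C)
    (hdim : Module.finrank 𝕜 E ≤ Module.finrank 𝕜 B + Module.finrank 𝕜 C) : C = Bᗮ :=
  eq_of_le_of_finrank_le hBC.ge (by have := B.finrank_add_finrank_orthogonal; omega)

theorem IsOrtho.inner_eq_zero_of_mem_orthogonal_of_finrank_le {B C : Submodule 𝕜 E}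
    (hBC : B ⟂ C) (hdim : Module.finrank 𝕜 E ≤ Module.finrank 𝕜 B + Module.finrank 𝕜 C)
    {x y : E} (hx : x ∈ Cᗮ) (hy : y ∈ Bᗮ) : ⟪x, y⟫_𝕜 = 0 := by
  rw [hBC.eq_orthogonal_of_finrank_le hdim, orthogonal_orthogonal] at hx
  exact inner_right_of_mem_orthogonal hx hy

end Submodule

open Submodule in
/-- If `π` is an orthogonal representation of the complete bipartite graph
`K_{n,n}` minus the edge `(b₀, c₀)` (vertices `Fin n ⊕ Fin n`, left part the `b`'s, right
part the `c`'s) into an inner product space `H` with `dim H ≤ 2(n-1)`, then either the span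
of `{π(b_i) : i = 1,…,n-1}` has dimension `< n-1`, or the span of `{π(c_i) : i = 1,…,n-1}`
has dimension `< n-1`, or `π(b₀)` is orthogonal to `π(c₀)`. -/
theorem stmt0 {H : Type*} [NormedAddCommGroup H] [InnerProductSpace ℂ H]
    [FiniteDimensional ℂ H] (n : ℕ) (hn : 2 ≤ n)
    (hdim : Module.finrank ℂ H ≤ 2 * (n - 1))
    (π : Fin n ⊕ Fin n → H)
    (horth : ∀ j k : Fin n, (j, k) ≠ ((⟨0, by omega⟩ : Fin n), (⟨0, by omega⟩ : Fin n)) → ⟪π (Sum.inl j), π (Sum.inr k)⟫_ℂ = 0) :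
    Module.finrank ℂ
        (Submodule.span ℂ (Set.range fun i : {i : Fin n // i.1 ≠ 0} => π (Sum.inl i.1)))
        < n - 1 ∨
    Module.finrank ℂ
        (Submodule.span ℂ (Set.range fun i : {i : Fin n // i.1 ≠ 0} => π (Sum.inr i.1)))
        < n - 1 ∨
    ⟪π (Sum.inl (⟨0, by omega⟩ : Fin n)), π (Sum.inr (⟨0, by omega⟩ : Fin n))⟫_ℂ = 0 := by
  set b₀ : Fin n := ⟨0, by omega⟩
  set B := span ℂ (Set.range fun i : {i : Fin n // i.1 ≠ 0} => π (Sum.inl i.1))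
  set C := span ℂ (Set.range fun i : {i : Fin n // i.1 ≠ 0} => π (Sum.inr i.1))
  by_contra! ⟨hB, hC, h₀⟩
  have horth' (j k : Fin n) (hjk : j.1 ≠ 0 ∨ k.1 ≠ 0) : ⟪π (Sum.inl j), π (Sum.inr k)⟫_ℂ = 0 :=
    horth j k (by rcases hjk with h | h <;> simp [b₀, Fin.ext_iff, h])
  have hBC : B ⟂ C := by
    rw [isOrtho_span]
    rintro _ ⟨j, rfl⟩ _ ⟨k, rfl⟩
    exact horth' j k (.inl j.2)
  have hb₀ : π (Sum.inl b₀) ∈ Cᗮ := mem_orthogonal_span_range fun k ↦ by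
    rw [inner_eq_zero_symm]
    exact horth' b₀ k (.inr k.2)
  have hc₀ : π (Sum.inr b₀) ∈ Bᗮ := mem_orthogonal_span_range fun j ↦ horth' j b₀ (.inl j.2)
  exact h₀ (hBC.inner_eq_zero_of_mem_orthogonal_of_finrank_le (by omega) hb₀ hc₀)
end

section
/- Any linear subspace S of the space of n×n complex matrices that contains only singular matrices has dimension at most n² - n. -/
/-!
Singular matrices have rank at most `n - 1`, so the theorem follows from Flanders' bound: over an
infinite field, a space `T` of endomorphisms of an `n`-dimensional space `V`, all of rank at most
`r`, has dimension at most `n r`.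

Fix `f₀ ∈ T` of maximal rank `r` and write `f ∈ T` in blocks with respect to `V = C ⊕ ker f₀` and
`V = range f₀ ⊕ D`, so that `f₀ : C ≃ range f₀`. Every `f₀ + t f` has rank at most `r`, while an
injective map stays injective under a generic perturbation; hence `f` maps `ker f₀` into
`range f₀`. The same rank bound yields a subspace `U ≤ C` such that, when the block
`C → range f₀` of `f` vanishes, `f (ker f₀) ≤ f₀ U`, and if moreover `f` kills `ker f₀`, then `f`
kills `U`. So `f` is determined by its blocks `C → range f₀`, `ker f₀ → f₀ U` and `U' → D`, for a
complement `U'` of `U` in `C`, and `dim T ≤ r² + (n - r) u + (r - u) (n - r) = n r`.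
-/

open LinearMap Module Submodule Function

section

variable {K V₁ V₂ : Type*} [Field K] [AddCommGroup V₁] [Module K V₁] [FiniteDimensional K V₁]
  [AddCommGroup V₂] [Module K V₂]

/- With `L ∘ Λ₀ = 1`, a kernel vector of `Λ₀ + t • Λ₁` is an eigenvector of `L ∘ Λ₁` for `-t⁻¹`. -/
theorem LinearMap.finite_setOf_not_injective_add_smul (Λ₀ Λ₁ : V₁ →ₗ[K] V₂)
    (h : Injective Λ₀) : {t : K | ¬ Injective (Λ₀ + t • Λ₁)}.Finite := by
  obtain ⟨L, hL⟩ := Λ₀.exists_leftInverse_of_injective (ker_eq_bot.mpr h)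
  refine ((Module.End.finite_hasEigenvalue (L ∘ₗ Λ₁)).image fun μ => -μ⁻¹).subset ?_
  intro t ht
  obtain ⟨v, hv, hv0⟩ : ∃ v, (Λ₀ + t • Λ₁) v = 0 ∧ v ≠ 0 := by
    simpa [injective_iff_map_eq_zero] using ht
  have hLv : v + t • (L ∘ₗ Λ₁) v = 0 := by
    simpa [← LinearMap.comp_apply L Λ₀, hL] using congrArg L hv
  have ht0 : t ≠ 0 := by
    rintro rfl
    exact hv0 (by simpa using hLv)
  refine ⟨-t⁻¹, Module.End.hasEigenvalue_of_hasEigenvector ⟨?_, hv0⟩, by simp⟩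
  rw [Module.End.mem_eigenspace_iff]
  have := congrArg (t⁻¹ • ·) hLv
  simp only [smul_add, smul_smul, inv_mul_cancel₀ ht0, one_smul, smul_zero] at this
  rwa [neg_smul, eq_neg_iff_add_eq_zero, add_comm]

end

section

variable {K V P : Type*} [Field K] [AddCommGroup V] [Module K V] [AddCommGroup P] [Module K P]
  {f₀ : V →ₗ[K] V} {C : Submodule K V}

theorem LinearMap.injective_comp_subtype_of_isCompl_ker (hC : IsCompl (ker f₀) C) :
    Injective (f₀ ∘ₗ C.subtype) := by
  rw [← ker_eq_bot, ker_comp, ← disjoint_iff_comap_eq_bot]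
  exact hC.disjoint.symm

theorem LinearMap.range_comp_subtype_of_isCompl_ker (hC : IsCompl (ker f₀) C) :
    range (f₀ ∘ₗ C.subtype) = range f₀ := by
  rw [range_comp, range_subtype, ← Submodule.map_top, ← hC.sup_eq_top, Submodule.map_sup,
    le_ker_iff_map.mp le_rfl, bot_sup_eq]

theorem LinearMap.finrank_eq_finrank_range_of_isCompl_ker (hC : IsCompl (ker f₀) C) :
    finrank K C = finrank K (range f₀) := by
  rw [← range_comp_subtype_of_isCompl_ker hC,
    finrank_range_of_inj (injective_comp_subtype_of_isCompl_ker hC)]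

variable (K) in
def blockMap {Q : Type*} [AddCommGroup Q] [Module K Q] (p : V →ₗ[K] P) (i : Q →ₗ[K] V) :
    (V →ₗ[K] V) →ₗ[K] Q →ₗ[K] P where
  toFun f := p ∘ₗ f ∘ₗ i
  map_add' f g := by rw [add_comp, comp_add]
  map_smul' c f := by rw [smul_comp, comp_smul, RingHom.id_apply]

end

section

variable {K V P : Type*} [Field K] [AddCommGroup V] [Module K V] [FiniteDimensional K V]
  [AddCommGroup P] [Module K P] {T : Submodule K (V →ₗ[K] V)} {f₀ : V →ₗ[K] V}

theorem LinearMap.apply_eq_of_injective_comp_subtype {g : V →ₗ[K] V} {p : V →ₗ[K] P}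
    {C : Submodule K V} (hinj : Injective (p ∘ₗ g ∘ₗ C.subtype))
    (hrank : finrank K (range g) ≤ finrank K C) {x y : V} (hx : x ∈ C)
    (hxy : p (g x) = p (g y)) : g x = g y := by
  have hgC : Injective (g ∘ₗ C.subtype) := by
    rw [LinearMap.coe_comp p] at hinj
    exact hinj.of_comp
  have hrange : range (g ∘ₗ C.subtype) = range g :=
    eq_of_le_of_finrank_le (range_comp_le_range _ _) (by rwa [finrank_range_of_inj hgC])
  obtain ⟨x', hx'⟩ : g y ∈ range (g ∘ₗ C.subtype) := hrange ▸ mem_range_self g y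
  have : x' = ⟨x, hx⟩ := hinj (by simpa [hxy] using congrArg p hx')
  simpa [this] using hx'

/- Otherwise `(w, c) ↦ w + c • f v` embeds `range f₀ × K` into `V`, and so does, for generic `t`,
its perturbation `(w, c) ↦ w + c • f v + t • f (ι w)` (where `f₀ ∘ ι = 1`), whose image lies in
`range (f₀ + t • f)`. -/
theorem apply_mem_range_of_maximal [Infinite K] (hf₀ : f₀ ∈ T)
    (hmax : ∀ g ∈ T, finrank K (range g) ≤ finrank K (range f₀))
    {f : V →ₗ[K] V} (hf : f ∈ T) {v : V} (hv : f₀ v = 0) : f v ∈ range f₀ := by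
  by_contra hfv
  obtain ⟨ι, hι⟩ := f₀.rangeRestrict.exists_rightInverse_of_surjective f₀.range_rangeRestrict
  have hf₀ι (w : range f₀) : f₀ (ι w) = w := congrArg Subtype.val (LinearMap.congr_fun hι w)
  set Λ₀ : range f₀ × K →ₗ[K] V := (range f₀).subtype.coprod (toSpanSingleton K V (f v))
  set Λ₁ : range f₀ × K →ₗ[K] V := f ∘ₗ ι ∘ₗ fst K _ K
  have hΛ₀ : Injective Λ₀ := by
    rw [injective_iff_map_eq_zero]
    rintro ⟨w, c⟩ h
    simp only [Λ₀, coprod_apply, Submodule.subtype_apply, toSpanSingleton_apply] at h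
    obtain rfl : c = 0 := by
      by_contra hc
      refine hfv ?_
      rw [← inv_smul_smul₀ hc (f v), eq_neg_of_add_eq_zero_right h]
      exact (range f₀).smul_mem _ ((range f₀).neg_mem w.2)
    simpa using h
  obtain ⟨t, ht⟩ := ((finite_setOf_not_injective_add_smul Λ₀ Λ₁ hΛ₀).union
    (Set.finite_singleton 0)).infinite_compl.nonempty
  simp only [Set.mem_compl_iff, Set.mem_union, Set.mem_ofPred_eq, not_not,
    Set.mem_singleton_iff, not_or] at ht
  have hle : range (Λ₀ + t • Λ₁) ≤ range (f₀ + t • f) := by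
    rintro _ ⟨⟨w, c⟩, rfl⟩
    refine ⟨ι w + (t⁻¹ * c) • v, ?_⟩
    simp [Λ₀, Λ₁, hf₀ι, hv, smul_smul, mul_inv_cancel_left₀ ht.2]
    abel
  have := (finrank_mono hle).trans (hmax _ (T.add_mem hf₀ (T.smul_mem t hf)))
  rw [finrank_range_of_inj ht.1, finrank_prod, finrank_self] at this
  omega

/- For `g = f₀ + t • f` with blocks `1 + t A` on `C → range f₀` (read through `π`) and `t B` on
`ker f₀ → range f₀`, the generators are the vectors `(1 + t A)⁻¹ (B y)`. -/
def resolventSpan (T : Submodule K (V →ₗ[K] V)) (f₀ : V →ₗ[K] V) (C : Submodule K V)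
    (π : V →ₗ[K] P) : Submodule K C :=
  span K {x : C | ∃ g ∈ T, Injective (π ∘ₗ g ∘ₗ C.subtype) ∧ ∃ y, f₀ y = 0 ∧ π (g x) = π (g y)}

theorem resolventSpan_le_ker {C : Submodule K V} {π : V →ₗ[K] P}
    (hmax : ∀ g ∈ T, finrank K (range g) ≤ finrank K (range f₀)) (hC : IsCompl (ker f₀) C)
    {f : V →ₗ[K] V} (hf : f ∈ T) (hA : π ∘ₗ f ∘ₗ C.subtype = 0) (hB : ker f₀ ≤ ker f) :
    resolventSpan T f₀ C π ≤ ker (f ∘ₗ C.subtype) := by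
  have hrank : ∀ g ∈ T, finrank K (range g) ≤ finrank K C := by
    rwa [finrank_eq_finrank_range_of_isCompl_ker hC]
  refine span_le.mpr ?_
  rintro x ⟨g, hg, hinj, y, hy, hxy⟩
  have hfx : π (f x) = 0 := LinearMap.congr_fun hA x
  have hfy : f y = 0 := hB hy
  have hinj' : Injective (π ∘ₗ (g + f) ∘ₗ C.subtype) := by
    rwa [add_comp, comp_add, hA, add_zero]
  have hgxy := apply_eq_of_injective_comp_subtype hinj (hrank g hg) x.2 hxy
  have hgfxy := apply_eq_of_injective_comp_subtype hinj' (hrank _ (T.add_mem hg hf)) x.2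
    (y := y) (by simp [hxy, hfx, hfy])
  simpa [hgxy, hfy] using hgfxy

theorem map_ker_le_map_resolventSpan [Infinite K] {C D : Submodule K V} (hf₀ : f₀ ∈ T)
    (hmax : ∀ g ∈ T, finrank K (range g) ≤ finrank K (range f₀)) (hC : IsCompl (ker f₀) C)
    (hD : IsCompl (range f₀) D) {f : V →ₗ[K] V} (hf : f ∈ T)
    (hA : (range f₀).projectionOnto D hD ∘ₗ f ∘ₗ C.subtype = 0) :
    (ker f₀).map f ≤
      (resolventSpan T f₀ C ((range f₀).projectionOnto D hD)).map (f₀ ∘ₗ C.subtype) := by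
  set π := (range f₀).projectionOnto D hD
  rintro _ ⟨y, hy, rfl⟩
  have hπf₀ (x : V) : (π (f₀ x) : V) = f₀ x := by
    rw [projectionOnto_apply_of_mem_left hD (mem_range_self f₀ x)]
  obtain ⟨x, hx⟩ : f y ∈ range (f₀ ∘ₗ C.subtype) := by
    rw [range_comp_subtype_of_isCompl_ker hC]
    exact apply_mem_range_of_maximal hf₀ hmax hf hy
  refine ⟨x, subset_span ⟨f₀ + f, T.add_mem hf₀ hf, ?_, y, hy, ?_⟩, hx⟩
  · rw [add_comp, comp_add, hA, add_zero]
    intro a b hab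
    exact injective_comp_subtype_of_isCompl_ker hC
      (by simpa [hπf₀] using congrArg Subtype.val hab)
  · have hfx : π (f x) = 0 := LinearMap.congr_fun hA x
    simp [hfx, mem_ker.mp hy, ← hx]

theorem eq_zero_of_blocks_eq_zero [Infinite K] {C D : Submodule K V} (hf₀ : f₀ ∈ T)
    (hmax : ∀ g ∈ T, finrank K (range g) ≤ finrank K (range f₀)) (hC : IsCompl (ker f₀) C)
    (hD : IsCompl (range f₀) D) {U' : Submodule K C} {Z : Submodule K V}
    (hU : IsCompl (resolventSpan T f₀ C ((range f₀).projectionOnto D hD)) U')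
    (hZ : IsCompl ((resolventSpan T f₀ C ((range f₀).projectionOnto D hD)).map
      (f₀ ∘ₗ C.subtype)) Z)
    {f : V →ₗ[K] V} (hf : f ∈ T)
    (hA : (range f₀).projectionOnto D hD ∘ₗ f ∘ₗ C.subtype = 0)
    (hB : projectionOnto _ Z hZ ∘ₗ f ∘ₗ (ker f₀).subtype = 0)
    (hCU : D.projectionOnto (range f₀) hD.symm ∘ₗ f ∘ₗ C.subtype ∘ₗ U'.subtype = 0) :
    f = 0 := by
  have hker : ker f₀ ≤ ker f := by
    intro y hy
    have hyU : f y ∈ _ := map_ker_le_map_resolventSpan hf₀ hmax hC hD hf hA ⟨y, hy, rfl⟩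
    have hyZ : f y ∈ Z :=
      (projectionOnto_apply_eq_zero_iff hZ).mp (LinearMap.congr_fun hB ⟨y, hy⟩)
    exact disjoint_def.mp hZ.disjoint _ hyU hyZ
  have hCker : ker (f ∘ₗ C.subtype) = ⊤ := by
    refine eq_top_iff.mpr (hU.sup_eq_top ▸ sup_le (resolventSpan_le_ker hmax hC hf hA hker) ?_)
    intro z hz
    have hπ : (range f₀).projectionOnto D hD (f z) = 0 := LinearMap.congr_fun hA z
    have hπD : D.projectionOnto (range f₀) hD.symm (f z) = 0 := LinearMap.congr_fun hCU ⟨z, hz⟩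
    rw [mem_ker, LinearMap.comp_apply, Submodule.subtype_apply,
      ← projection_add_projection_eq_self hD (f z), projection_apply, projection_apply]
    simp only [hπ, hπD, ZeroMemClass.coe_zero, add_zero]
  rw [← ker_eq_top, eq_top_iff, ← hC.sup_eq_top]
  exact sup_le hker fun x hx => LinearMap.congr_fun (ker_eq_top.mp hCker) ⟨x, hx⟩

theorem finrank_le_mul_finrank_range_of_maximal [Infinite K] (hf₀ : f₀ ∈ T)
    (hmax : ∀ g ∈ T, finrank K (range g) ≤ finrank K (range f₀)) :
    finrank K T ≤ finrank K V * finrank K (range f₀) := by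
  obtain ⟨C, hC⟩ := (ker f₀).exists_isCompl
  obtain ⟨D, hD⟩ := (range f₀).exists_isCompl
  set U := resolventSpan T f₀ C ((range f₀).projectionOnto D hD)
  obtain ⟨U', hU⟩ := U.exists_isCompl
  obtain ⟨Z, hZ⟩ := (U.map (f₀ ∘ₗ C.subtype)).exists_isCompl
  let Φ := (blockMap K ((range f₀).projectionOnto D hD) C.subtype).prod
    ((blockMap K (projectionOnto _ Z hZ) (ker f₀).subtype).prod
      (blockMap K (D.projectionOnto _ hD.symm) (C.subtype ∘ₗ U'.subtype)))
  have hΦ : Injective (Φ ∘ₗ T.subtype) := by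
    rw [← ker_eq_bot, ker_eq_bot']
    rintro ⟨f, hf⟩ hΦf
    exact Subtype.ext (eq_zero_of_blocks_eq_zero hf₀ hmax hC hD hU hZ hf (congrArg Prod.fst hΦf)
      (congrArg (Prod.fst ∘ Prod.snd) hΦf) (congrArg (Prod.snd ∘ Prod.snd) hΦf))
  have hdim := finrank_le_finrank_of_injective hΦ
  rw [finrank_prod, finrank_prod, finrank_linearMap, finrank_linearMap, finrank_linearMap,
    ← (equivMapOfInjective _ (injective_comp_subtype_of_isCompl_ker hC) U).finrank_eq,
    finrank_eq_finrank_range_of_isCompl_ker hC] at hdim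
  have hCV := finrank_add_eq_of_isCompl hC
  have hDV := finrank_add_eq_of_isCompl hD
  have hUC := finrank_add_eq_of_isCompl hU
  rw [finrank_eq_finrank_range_of_isCompl_ker hC] at hCV hUC
  nlinarith

theorem finrank_le_mul_of_forall_finrank_range_le [Infinite K] (T : Submodule K (V →ₗ[K] V))
    {r : ℕ} (hr : ∀ f ∈ T, finrank K (range f) ≤ r) : finrank K T ≤ finrank K V * r := by
  set R := (fun f => finrank K (range f)) '' (T : Set (V →ₗ[K] V))
  have hR : BddAbove R := ⟨finrank K V, by rintro _ ⟨f, -, rfl⟩; exact Submodule.finrank_le _⟩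
  obtain ⟨f₀, hf₀, hf₀R⟩ := Nat.sSup_mem (Set.Nonempty.image _ ⟨0, T.zero_mem⟩) hR
  have hmax : ∀ g ∈ T, finrank K (range g) ≤ finrank K (range f₀) := fun g hg =>
    (le_csSup hR ⟨g, hg, rfl⟩).trans_eq hf₀R.symm
  exact (finrank_le_mul_finrank_range_of_maximal hf₀ hmax).trans
    (Nat.mul_le_mul_left _ (hr f₀ hf₀))

end

theorem Matrix.finrank_range_toLin'_lt_of_det_eq_zero {K ι : Type*} [Field K] [Fintype ι]
    [DecidableEq ι] {M : Matrix ι ι K} (hM : M.det = 0) :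
    finrank K (range M.toLin') < Fintype.card ι := by
  obtain ⟨v, hv, hMv⟩ := Matrix.exists_mulVec_eq_zero_iff.mpr hM
  have hker : 0 < finrank K (ker M.toLin') :=
    finrank_pos_iff_exists_ne_zero.mpr ⟨⟨v, hMv⟩, fun h => hv (congrArg Subtype.val h)⟩
  have := finrank_range_add_finrank_ker M.toLin'
  rw [finrank_fintype_fun_eq_card] at this
  omega

/-- Dieudonné: any linear subspace of the `n×n` complex matrices consisting
entirely of singular matrices has dimension at most `n² - n`. -/
theorem stmt3 (n : ℕ) (S : Submodule ℂ (Matrix (Fin n) (Fin n) ℂ))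
    (hS : ∀ M ∈ S, M.det = 0) :
    Module.finrank ℂ S ≤ n ^ 2 - n := by
  have hrank : ∀ f ∈ S.map Matrix.toLin'.toLinearMap, finrank ℂ (range f) ≤ n - 1 := by
    rintro _ ⟨M, hM, rfl⟩
    simpa using Nat.le_sub_one_of_lt (Matrix.finrank_range_toLin'_lt_of_det_eq_zero (hS M hM))
  calc finrank ℂ S = finrank ℂ (S.map Matrix.toLin'.toLinearMap) :=
        (LinearEquiv.finrank_map_eq _ _).symm
    _ ≤ n * (n - 1) := by
        simpa using finrank_le_mul_of_forall_finrank_range_le _ hrank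
    _ = n ^ 2 - n := by rw [Nat.mul_sub_one, sq]
end

section
/- For every L ≥ 1 the W-state W(L) on L qubits admits a translation-invariant border bond dimension 2 representation: with M_0(ε) = diag(1, ζ) where ζ = (-1)^{1/L} (an L-th root of -1), and M_1(ε) = diag(ε, 0), one has ∑_{i_1,...,i_L ∈ {0,1}} tr(M_{i_1}(ε)···M_{i_L}(ε)) |i_1,...,i_L⟩ = ε·W(L) + O(ε²). In particular, tr(M_0(ε)^L) = 0 and the only words with nonzero trace of first order in ε are those with exactly one index equal to 1. -/
/-!
All matrices involved are diagonal, so the trace of a word is the sum of the products of its two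
diagonal entries. The first entry gives `ε ^ k`, where `k` is the number of ones in the word; the
second entry vanishes unless the word is all zeros, where it is `ζ ^ L = -1` and cancels the `1`
from the first entry. Hence the trace is `ε` on words with a single one, `0` on the zero word and
`O(ε²)` on the others.
-/

open Matrix Polynomial

theorem Matrix.trace_prod_ofFn_diagonal {n R : Type*} [Fintype n] [DecidableEq n] [CommRing R]
    {L : ℕ} (d : Fin L → n → R) :
    (List.ofFn fun i => diagonal (d i)).prod.trace = ∑ j, ∏ i, d i j := by
  have : (List.ofFn fun i => diagonal (d i)) = (List.ofFn d).map (diagonalRingHom n R) := by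
    simp [List.map_ofFn, Function.comp_def]
  rw [this, ← map_list_prod, List.prod_ofFn, diagonalRingHom_apply, trace_diagonal]
  simp [Finset.prod_apply]

theorem ite_fin_two_eq_pow {M : Type*} [Monoid M] (a : Fin 2) (x : M) :
    (if a = 0 then 1 else x) = x ^ (a : ℕ) := by
  fin_cases a <;> simp

theorem prod_ite_fin_two_eq_zero {R : Type*} [CommMonoidWithZero R] {L : ℕ} (w : Fin L → Fin 2)
    (x : R) : (∏ i, if w i = 0 then x else 0) = if ∑ i, (w i : ℕ) = 0 then x ^ L else 0 := by
  simp [Finset.prod_ite_zero, Finset.sum_eq_zero_iff, Fin.val_eq_zero_iff]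

theorem trace_prod_ofFn_ite_diag {R : Type*} [CommRing R] {L : ℕ} (ζ ε : R)
    (w : Fin L → Fin 2) :
    (List.ofFn fun i : Fin L =>
        if w i = 0 then !![(1 : R), 0; 0, ζ] else !![ε, 0; 0, 0]).prod.trace
      = ε ^ ∑ i, (w i : ℕ) + if ∑ i, (w i : ℕ) = 0 then ζ ^ L else 0 := by
  simp only [← diagonal_vec2, ← apply_ite diagonal, trace_prod_ofFn_diagonal, Fin.sum_univ_two,
    ite_apply, cons_val_zero, cons_val_one, ite_fin_two_eq_pow, Finset.prod_pow_eq_pow_sum,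
    prod_ite_fin_two_eq_zero]

theorem pow_eq_ite_add_ite {R : Type*} [CommRing R] (x : R) (k : ℕ) :
    x ^ k = (if k = 0 then 1 else 0) + x * (if k = 1 then 1 else 0)
      + x ^ 2 * (if 2 ≤ k then X ^ (k - 2) else 0 : R[X]).eval x := by
  rcases k with _ | _ | k <;> simp
  ring

theorem stmt5_general (L : ℕ) (ζ : ℂ) (hζ : ζ ^ L = -1) :
    (∃ R : (Fin L → Fin 2) → Polynomial ℂ,
      ∀ (ε : ℂ) (w : Fin L → Fin 2),
        (List.ofFn fun i : Fin L =>
            if w i = 0 then !![(1 : ℂ), 0; 0, ζ] else !![ε, 0; 0, 0]).prod.trace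
          = ε * (if (∑ i, ((w i : ℕ))) = 1 then 1 else 0) + ε ^ 2 * (R w).eval ε) ∧
    (!![(1 : ℂ), 0; 0, ζ] ^ L).trace = 0 := by
  refine ⟨⟨fun w => if 2 ≤ ∑ i, (w i : ℕ) then X ^ (∑ i, (w i : ℕ) - 2) else 0,
    fun ε w => ?_⟩, ?_⟩
  · dsimp only
    rw [trace_prod_ofFn_ite_diag, hζ, pow_eq_ite_add_ite ε (∑ i, (w i : ℕ))]
    split_ifs <;> ring
  · rw [← diagonal_vec2, diagonal_pow, trace_diagonal]
    simp [hζ]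

/-- translation-invariant border bond dimension 2 representation of the
W-state on `L ≥ 1` qubits.  With `M₀(ε) = diag(1, ζ)` where `ζ^L = -1` and
`M₁(ε) = diag(ε, 0)`, the MPS tensor `w ↦ tr(M_{w₁}(ε) ⋯ M_{w_L}(ε))` equals
`ε · W(L) + O(ε²)` coefficientwise, where `W(L)` has coefficient `1` exactly on the words
with a single `1`.  In particular `tr(M₀(ε)^L) = 0`. -/
theorem stmt5 (L : ℕ) (hL : 1 ≤ L) (ζ : ℂ) (hζ : ζ ^ L = -1) :
    (∃ R : (Fin L → Fin 2) → Polynomial ℂ,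
      ∀ (ε : ℂ) (w : Fin L → Fin 2),
        (List.ofFn fun i : Fin L =>
            if w i = 0 then !![(1 : ℂ), 0; 0, ζ] else !![ε, 0; 0, 0]).prod.trace
          = ε * (if (∑ i, ((w i : ℕ))) = 1 then 1 else 0) + ε ^ 2 * (R w).eval ε) ∧
    (!![(1 : ℂ), 0; 0, ζ] ^ L).trace = 0 :=
  stmt5_general L ζ hζ
end

section
/- The 2×2 matrices M_0 = (1/2)[[0,ε],[ε,0]], M_1 = [[0,-ε],[ε,0]], M_2^{(j)} = [[1,0],[0,-1]] + δ_{j,3}(ε²/2)·I (for sites j = 1,2,3) satisfy: ∑_{i,j,k=0}^{2} tr(M^{(1)}_i M^{(2)}_j M^{(3)}_k) |i,j,k⟩ = ε² λ + ε⁴ |2⟩⊗((1/4)|00⟩ − |11⟩), where λ = ∑_{i,j,k} ε_{ijk} |i,j,k⟩ + |2,2,2⟩. In particular this gives a degeneration MaMu_3(2) ⊵ λ with approximation degree 2 and error degree 2. -/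
/-- The totally antisymmetric Levi-Civita symbol on `{0,1,2}`, with `ε₀₁₂ = 1`. -/
noncomputable def levi (i j k : Fin 3) : ℂ :=
  ((((j : ℤ) - (i : ℤ)) * (((k : ℤ) - (j : ℤ))) * (((k : ℤ) - (i : ℤ))) : ℤ) : ℂ) / 2

/-- The RVB plaquette tensor `λ = ∑ ε_{ijk} |i,j,k⟩ + |2,2,2⟩`. -/
noncomputable def lamT (i j k : Fin 3) : ℂ :=
  levi i j k + if i = 2 ∧ j = 2 ∧ k = 2 then 1 else 0

/-- The MPS matrices of the degeneration `MaMu₃(2) ⊵ λ`: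
`M₀(ε) = (1/2)[[0,ε],[ε,0]]`, `M₁(ε) = [[0,-ε],[ε,0]]`,
`M₂^{(j)}(ε) = [[1,0],[0,-1]] + δ_{j,3}(ε²/2)·𝟙` for sites `j = 1,2,3`. -/
noncomputable def Mdeg (j : Fin 3) (ε : ℂ) : Fin 3 → Matrix (Fin 2) (Fin 2) ℂ
  | 0 => !![0, ε / 2; ε / 2, 0]
  | 1 => !![0, -ε; ε, 0]
  | 2 => !![1, 0; 0, -1] + (if j = 2 then ε ^ 2 / 2 else 0) • (1 : Matrix (Fin 2) (Fin 2) ℂ)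

/-- the matrices `Mdeg` realize the polynomial identity
`∑_{ijk} tr(M^{(1)}_i(ε) M^{(2)}_j(ε) M^{(3)}_k(ε)) |i,j,k⟩
  = ε² λ + ε⁴ (1/4·|00⟩ - |11⟩) ⊗ |2⟩`,
a degeneration `MaMu₃(2) ⊵ λ` with approximation degree 2 and error degree 2
(the `δ_{j,3}` correction sits at site 3, hence the error term carries `|2⟩` on the
factor of site 3). -/
theorem stmt9 (ε : ℂ) (i j k : Fin 3) :
    (Mdeg 0 ε i * Mdeg 1 ε j * Mdeg 2 ε k).trace
      = ε ^ 2 * lamT i j k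
        + ε ^ 4 * (if k = 2 then
            (if i = 0 ∧ j = 0 then (1 / 4 : ℂ) else 0)
              - (if i = 1 ∧ j = 1 then 1 else 0)
          else 0) := by
  fin_cases i <;> fin_cases j <;> fin_cases k <;>
    simp [Mdeg, lamT, levi, Matrix.trace, Matrix.diag, Fin.sum_univ_succ,
      Matrix.mul_apply, Matrix.one_apply, Matrix.smul_apply] <;> ring
end

section
/- There do not exist 2×2 complex matrices A_0, A_1, A_2, B_0, B_1, B_2, C_0, C_1, C_2 such that tr(A_i B_j C_k) = ε_{ijk} + δ_{i,2}δ_{j,2}δ_{k,2} for all i,j,k ∈ {0,1,2}. In other words, the RVB plaquette tensor λ has no MPS representation with uniform bond dimension 2: MaMu_3(2) does not restrict to λ. -/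
open Matrix

namespace Matrix

variable {R K : Type*} [CommRing R] [Field K]

lemma exists_eq_vecMulVec_of_det_eq_zero {M : Matrix (Fin 2) (Fin 2) K} (h : M.det = 0) :
    ∃ u v, M = vecMulVec u v := by
  rw [det_fin_two] at h
  by_cases h00 : M 0 0 = 0
  · rcases mul_eq_zero.mp (show M 0 1 * M 1 0 = 0 by linear_combination -h + M 1 1 * h00)
      with h01 | h10
    · exact ⟨![0, 1], M 1, by ext i j; fin_cases i <;> fin_cases j <;> simp [vecMulVec, h00, h01]⟩
    · exact ⟨fun i => M i 1, ![0, 1], by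
        ext i j; fin_cases i <;> fin_cases j <;> simp [vecMulVec, h00, h10]⟩
  · refine ⟨fun i => M i 0, ![1, M 0 1 / M 0 0], ?_⟩
    ext i j
    fin_cases i <;> fin_cases j <;> simp [vecMulVec]
    · field_simp
    · rw [mul_div_assoc', eq_comm, div_eq_iff h00]; linear_combination -h

lemma det_mul_eq_zero_of_fin_three_fin_two (X : Matrix (Fin 3) (Fin 2) R)
    (Y : Matrix (Fin 2) (Fin 3) R) : (X * Y).det = 0 := by
  simp [det_fin_three, mul_apply, Fin.sum_univ_two]
  ring

lemma det_trace_mul_mul_vecMulVec_eq_zero (A B : Fin 3 → Matrix (Fin 2) (Fin 2) R)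
    (u v : Fin 2 → R) :
    (of fun i j => (A i * B j * vecMulVec u v).trace).det = 0 := by
  have hfactor : (of fun i j => (A i * B j * vecMulVec u v).trace)
      = (of fun i m => (v ᵥ* A i) m) * (of fun m j => (B j *ᵥ u) m) := by
    ext i j
    simp [trace, mul_apply, vecMulVec, vecMul, mulVec, dotProduct, Fin.sum_univ_two]
    ring
  rw [hfactor]
  exact det_mul_eq_zero_of_fin_three_fin_two _ _

lemma det_trace_mul_mul_eq_zero_of_det_eq_zero (A B : Fin 3 → Matrix (Fin 2) (Fin 2) K)
    {M : Matrix (Fin 2) (Fin 2) K} (hM : M.det = 0) :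
    (of fun i j => (A i * B j * M).trace).det = 0 := by
  obtain ⟨u, v, rfl⟩ := exists_eq_vecMulVec_of_det_eq_zero hM
  exact det_trace_mul_mul_vecMulVec_eq_zero A B u v

lemma det_add_smul_one_fin_two (N : Matrix (Fin 2) (Fin 2) R) (t : R) :
    (N + t • 1).det = t ^ 2 + N.trace * t + N.det := by
  simp [det_fin_two, trace_fin_two]
  ring

open Polynomial in
lemma trace_eq_zero_and_det_eq_zero_of_forall_det_add_smul_one [IsAlgClosed K]
    {N : Matrix (Fin 2) (Fin 2) K} (h : ∀ t : K, (N + t • 1).det = 0 → t = 0) :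
    N.trace = 0 ∧ N.det = 0 := by
  obtain ⟨r, hr⟩ := IsAlgClosed.exists_root (C 1 * X ^ 2 + C N.trace * X + C N.det)
    (by rw [degree_quadratic one_ne_zero]; decide)
  have hr : (N + r • 1).det = 0 := by
    rw [det_add_smul_one_fin_two]; simpa using hr
  have hs : (N + (-N.trace - r) • 1).det = 0 := by
    rw [det_add_smul_one_fin_two] at hr ⊢; linear_combination hr
  obtain rfl := h r hr
  have htr : N.trace = 0 := by simpa using h _ hs
  exact ⟨htr, by simpa [det_add_smul_one_fin_two] using hr⟩

lemma not_linearIndependent_of_forall_trace_det_eq_zero {N N' : Matrix (Fin 2) (Fin 2) K}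
    (h : ∀ x y : K, (x • N + y • N').trace = 0 ∧ (x • N + y • N').det = 0) :
    ¬ LinearIndependent K ![N, N'] := by
  obtain ⟨t, d⟩ := h 1 0
  obtain ⟨t', d'⟩ := h 0 1
  obtain ⟨-, d''⟩ := h 1 1
  simp only [trace_fin_two, det_fin_two, Matrix.add_apply, Matrix.smul_apply, smul_eq_mul,
    one_mul, zero_mul, add_zero, zero_add] at t d t' d' d''
  have f : N 0 0 ^ 2 + N 0 1 * N 1 0 = 0 := by linear_combination N 0 0 * t - d
  have f' : N' 0 0 ^ 2 + N' 0 1 * N' 1 0 = 0 := by linear_combination N' 0 0 * t' - d'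
  have f'' : 2 * N 0 0 * N' 0 0 + N 0 1 * N' 1 0 + N 1 0 * N' 0 1 = 0 := by
    linear_combination N 0 0 * t' + N' 0 0 * t - d'' + d + d'
  -- The `2 × 2` minors of the rows `(N₀₀, N₀₁, N₁₀)` and `(N'₀₀, N'₀₁, N'₁₀)` have vanishing
  -- squares.
  have m₁ : N 0 1 * N' 0 0 - N 0 0 * N' 0 1 = 0 := pow_eq_zero_iff two_ne_zero |>.mp <| by
    linear_combination N' 0 1 ^ 2 * f + N 0 1 ^ 2 * f' - N 0 1 * N' 0 1 * f''
  have m₂ : N 1 0 * N' 0 0 - N 0 0 * N' 1 0 = 0 := pow_eq_zero_iff two_ne_zero |>.mp <| by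
    linear_combination N' 1 0 ^ 2 * f + N 1 0 ^ 2 * f' - N 1 0 * N' 1 0 * f''
  have m₃ : N 0 1 * N' 1 0 - N 1 0 * N' 0 1 = 0 := pow_eq_zero_iff two_ne_zero |>.mp <| by
    linear_combination (N 0 1 * N' 1 0 + N 1 0 * N' 0 1 - 2 * N 0 0 * N' 0 0) * f''
      + 4 * N' 0 0 ^ 2 * f - 4 * N 0 1 * N 1 0 * f'
  rw [LinearIndependent.pair_iff]
  intro hli
  have hN : N = 0 := by
    ext i j
    refine neg_eq_zero.mp (hli (N' i j) (-N i j) ?_).2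
    ext k l
    fin_cases i <;> fin_cases j <;> fin_cases k <;> fin_cases l <;> simp <;> grind
  simpa using hli 1 0 (by simp [hN])

end Matrix

noncomputable def rvbTensor (i j k : Fin 3) : ℂ :=
  levi i j k + if i = 2 ∧ j = 2 ∧ k = 2 then 1 else 0

lemma det_contract_rvbTensor (c : Fin 3 → ℂ) :
    (of fun i j => ∑ k, c k * rvbTensor i j k).det = c 2 ^ 3 := by
  simp [det_fin_three, Fin.sum_univ_three, rvbTensor, levi]
  ring

/-- there are no `2×2` complex matrices `A_i, B_j, C_k` (`i,j,k ∈ {0,1,2}`)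
with `tr(A_i B_j C_k) = ε_{ijk} + δ_{i,2}δ_{j,2}δ_{k,2}`; i.e. the RVB plaquette tensor
`λ` has no MPS representation with uniform bond dimension 2: `MaMu₃(2)` does not restrict
to `λ`. -/
theorem stmt11 :
    ¬ ∃ A B C : Fin 3 → Matrix (Fin 2) (Fin 2) ℂ,
        ∀ i j k : Fin 3,
          (A i * B j * C k).trace
            = levi i j k + if i = 2 ∧ j = 2 ∧ k = 2 then 1 else 0 := by
  rintro ⟨A, B, C, h⟩
  have hpencil : ∀ c : Fin 3 → ℂ, (∑ k, c k • C k).det = 0 → c 2 = 0 := by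
    intro c hc
    have hT := det_trace_mul_mul_eq_zero_of_det_eq_zero A B hc
    simp only [Matrix.mul_sum, Matrix.mul_smul, trace_sum, trace_smul, smul_eq_mul, h] at hT
    exact pow_eq_zero_iff three_ne_zero |>.mp <| (det_contract_rvbTensor c).symm.trans hT
  have hC₂ : IsUnit (C 2).det := isUnit_iff_ne_zero.mpr fun h₀ =>
    one_ne_zero <| hpencil ![0, 0, 1] (by simpa [Fin.sum_univ_three] using h₀)
  have hnil : ∀ x y : ℂ, (x • ((C 2)⁻¹ * C 0) + y • ((C 2)⁻¹ * C 1)).trace = 0 ∧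
      (x • ((C 2)⁻¹ * C 0) + y • ((C 2)⁻¹ * C 1)).det = 0 := by
    intro x y
    refine trace_eq_zero_and_det_eq_zero_of_forall_det_add_smul_one fun t ht => ?_
    refine hpencil ![x, y, t] ?_
    have hfactor : ∑ k, ![x, y, t] k • C k
        = C 2 * (x • ((C 2)⁻¹ * C 0) + y • ((C 2)⁻¹ * C 1) + t • 1) := by
      simp [Fin.sum_univ_three, Matrix.mul_add, ← Matrix.mul_assoc, mul_nonsing_inv _ hC₂]
    rw [hfactor, det_mul, ht, mul_zero]
  refine not_linearIndependent_of_forall_trace_det_eq_zero hnil ?_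
  rw [LinearIndependent.pair_iff]
  intro s t hst
  have hst : s • C 0 + t • C 1 = 0 := by
    simpa [Matrix.mul_add, ← Matrix.mul_assoc, mul_nonsing_inv _ hC₂]
      using congrArg (C 2 * ·) hst
  have h₀ := congrArg (fun M => (A 0 * B 2 * M).trace) hst
  have h₁ := congrArg (fun M => (A 1 * B 2 * M).trace) hst
  exact ⟨by simpa [Matrix.mul_add, trace_add, trace_smul, h, levi] using h₁,
    by simpa [Matrix.mul_add, trace_add, trace_smul, h, levi] using h₀⟩
end

section
/- Let k ≥ 1 and define the diagonal degeneration maps A(ε)|i,j⟩ = ε^{(i-g)² + 2ij}|i,j⟩ on ℂ^{k₁}⊗ℂ^{k₂} etc. Applied to the triangle of maximally entangled pairs MaMu(k₁,k₂,k₃) = ∑_{i₁,i₂,i₃} |i₁i₂⟩|i₂i₃⟩|i₃i₁⟩, the leading-order term in ε of (A⊗A⊗A)·MaMu(k₁,k₂,k₃) is ε^{2g²} ∑_{i₁+i₂+i₃ = g} |i₁i₂⟩|i₂i₃⟩|i₃i₁⟩, which is equivalent (after relabeling by an injective map) to a GHZ state with a number of levels equal to the number of solutions (i₁,i₂,i₃)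 ∈ {1,...,k₁}×{1,...,k₂}×{1,...,k₃} of i₁+i₂+i₃ = g. In particular with (k₁,k₂,k₃)=(2,2,3) and g = 5 one gets 4 solutions, showing MaMu(2,2,3) ⊵ GHZ_3(4). -/
/-!
Weight the basis vector `|i, j⟩` of each edge of the triangle by `ε ^ ((i - g)² + 2ij)`. Around a
closed triangle `(i₁, i₂, i₃)` the exponents add up to `2g² + (i₁ + i₂ + i₃ - g)²`, so the
lowest power `ε ^ (2g²)` is carried exactly by the triangles with `i₁ + i₂ + i₃ = g`. Keeping on
each edge only the vectors `|i, j⟩` that occur in such a triangle, the local maps are indexed by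
the solutions, and three solutions `r, s, t` that close up to a triangle with `i₁ + i₂ + i₃ = g`
coincide, because any two of `i₁, i₂, i₃` determine the third: the leading term is a GHZ state.
-/

open Polynomial Finset Matrix Function

theorem Polynomial.exists_eq_X_pow_mul_C_add_sum {R ι : Type*} [CommRing R] [Fintype ι]
    (p : ι → R[X]) (c : ι → R) (d : ℕ) (h : ∀ i, X ^ (d + 1) ∣ p i - X ^ d * C (c i)) :
    ∃ (e : ℕ) (a : Fin e → ι → R),
      ∀ i, p i = X ^ d * C (c i) + ∑ l : Fin e, X ^ (d + (l : ℕ) + 1) * C (a l i) := by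
  choose q hq using h
  refine ⟨univ.sup (fun i => (q i).natDegree) + 1, fun l i => (q i).coeff l, fun i => ?_⟩
  have hdeg : (q i).natDegree < univ.sup (fun i => (q i).natDegree) + 1 :=
    Nat.lt_succ_of_le (le_sup (f := fun i => (q i).natDegree) (mem_univ i))
  rw [Fin.sum_univ_eq_sum_range (fun l => X ^ (d + l + 1) * C ((q i).coeff l)),
    ← sub_eq_iff_eq_add', hq]
  conv_lhs => rw [as_sum_range_C_mul_X_pow' (q i) hdeg, mul_sum]
  exact sum_congr rfl fun l _ => by ring

/-- The `(r, s, t)` coefficient of `(A ⊗ B ⊗ C) · MaMu`. -/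
def mamuImage {ι κ μ m n o R : Type*} [Fintype m] [Fintype n] [Fintype o] [CommSemiring R]
    (A : Matrix ι (m × n) R) (B : Matrix κ (n × o) R) (C : Matrix μ (o × m) R)
    (r : ι) (s : κ) (t : μ) : R :=
  ∑ i₁, ∑ i₂, ∑ i₃, A r (i₁, i₂) * B s (i₂, i₃) * C t (i₃, i₁)

theorem mamuImage_submatrix_diagonal {ι κ μ m n o R : Type*} [Fintype m] [Fintype n] [Fintype o]
    [DecidableEq m] [DecidableEq n] [DecidableEq o] [CommSemiring R]
    (d₁ : m × n → R) (d₂ : n × o → R) (d₃ : o × m → R)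
    (π₁ : ι → m × n) (π₂ : κ → n × o) (π₃ : μ → o × m) (r : ι) (s : κ) (t : μ) :
    mamuImage ((diagonal d₁).submatrix π₁ id) ((diagonal d₂).submatrix π₂ id)
        ((diagonal d₃).submatrix π₃ id) r s t =
      if (π₁ r).2 = (π₂ s).1 ∧ (π₂ s).2 = (π₃ t).1 ∧ (π₃ t).2 = (π₁ r).1 then
        d₁ (π₁ r) * d₂ (π₂ s) * d₃ (π₃ t) else 0 := by
  simp only [mamuImage, submatrix_apply, id, diagonal_apply, Prod.ext_iff, ite_mul, mul_ite,
    zero_mul, mul_zero]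
  simp [ite_and]
  grind

theorem triangle_exponent_sum (g i₁ i₂ i₃ : ℤ) :
    ((i₁ - g) ^ 2 + 2 * i₁ * i₂) + ((i₂ - g) ^ 2 + 2 * i₂ * i₃) + ((i₃ - g) ^ 2 + 2 * i₃ * i₁)
      = 2 * g ^ 2 + (i₁ + i₂ + i₃ - g) ^ 2 := by
  ring

def degenExponent (g a b : ℕ) : ℕ := ((a : ℤ) - g).natAbs ^ 2 + 2 * a * b

theorem degenExponent_triangle (g a b c : ℕ) :
    degenExponent g a b + degenExponent g b c + degenExponent g c a
      = 2 * g ^ 2 + ((↑(a + b + c) : ℤ) - g).natAbs ^ 2 := by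
  simp only [degenExponent]
  zify
  simp only [sq_abs]
  exact triangle_exponent_sum g a b c

/-- The diagonal map `A(ε)` on `ℂᵐ ⊗ ℂⁿ`; the basis index `i : Fin m` carries the label `i + 1`. -/
noncomputable def degenMap (m n g : ℕ) : Matrix (Fin m × Fin n) (Fin m × Fin n) ℂ[X] :=
  diagonal fun p => X ^ degenExponent g (p.1 + 1) (p.2 + 1)

def sumEqSolutions (k₁ k₂ k₃ g : ℕ) : Finset (Fin k₁ × Fin k₂ × Fin k₃) :=
  univ.filter fun p => ((p.1 : ℕ) + 1) + ((p.2.1 : ℕ) + 1) + ((p.2.2 : ℕ) + 1) = g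

theorem eq_of_mem_sumEqSolutions {k₁ k₂ k₃ g : ℕ} {r s t : Fin k₁ × Fin k₂ × Fin k₃}
    (hr : r ∈ sumEqSolutions k₁ k₂ k₃ g) (hs : s ∈ sumEqSolutions k₁ k₂ k₃ g)
    (ht : t ∈ sumEqSolutions k₁ k₂ k₃ g) (h₂ : r.2.1 = s.2.1) (h₃ : s.2.2 = t.2.2) (h₁ : t.1 = r.1)
    (hg : ((r.1 : ℕ) + 1) + ((r.2.1 : ℕ) + 1) + ((s.2.2 : ℕ) + 1) = g) :
    r = s ∧ s = t := by
  simp only [sumEqSolutions, mem_filter, mem_univ, true_and] at hr hs ht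
  simp only [Prod.ext_iff, Fin.ext_iff] at h₁ h₂ h₃ ⊢
  omega

section
variable {ι : Type*} {k₁ k₂ k₃ : ℕ} (g : ℕ) (σ : ι → Fin k₁ × Fin k₂ × Fin k₃)

noncomputable def degenA : Matrix ι (Fin k₁ × Fin k₂) ℂ[X] :=
  (degenMap k₁ k₂ g).submatrix (fun r => ((σ r).1, (σ r).2.1)) id

noncomputable def degenB : Matrix ι (Fin k₂ × Fin k₃) ℂ[X] :=
  (degenMap k₂ k₃ g).submatrix (fun s => ((σ s).2.1, (σ s).2.2)) id

noncomputable def degenC : Matrix ι (Fin k₃ × Fin k₁) ℂ[X] :=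
  (degenMap k₃ k₁ g).submatrix (fun t => ((σ t).2.2, (σ t).1)) id

variable {g σ} in
theorem X_pow_dvd_mamuImage_degen_sub [DecidableEq ι] (hσ : Injective σ)
    (hS : ∀ r, σ r ∈ sumEqSolutions k₁ k₂ k₃ g) (r s t : ι) :
    X ^ (2 * g ^ 2 + 1) ∣ mamuImage (degenA g σ) (degenB g σ) (degenC g σ) r s t
      - X ^ (2 * g ^ 2) * C (if r = s ∧ s = t then 1 else 0) := by
  rw [degenA, degenB, degenC, degenMap, degenMap, degenMap, mamuImage_submatrix_diagonal]
  simp only [← pow_add]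
  by_cases hrst : r = s ∧ s = t
  · obtain ⟨rfl, rfl⟩ := hrst
    have hg := hS r
    simp only [sumEqSolutions, mem_filter, mem_univ, true_and] at hg
    rw [if_pos ⟨rfl, rfl, rfl⟩, if_pos ⟨rfl, rfl⟩, C_1, mul_one, degenExponent_triangle, hg,
      sub_self, Int.natAbs_zero, zero_pow two_ne_zero, add_zero, sub_self]
    exact dvd_zero _
  · rw [if_neg hrst, C_0, mul_zero, sub_zero]
    split_ifs with hcons
    · obtain ⟨h₂, h₃, h₁⟩ := hcons
      have hsum : ((σ r).1 : ℕ) + 1 + ((σ r).2.1 + 1) + ((σ s).2.2 + 1) ≠ g := fun hg => by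
        obtain ⟨hrs, hst⟩ := eq_of_mem_sumEqSolutions (hS r) (hS s) (hS t) h₂ h₃ h₁ hg
        exact hrst ⟨hσ hrs, hσ hst⟩
      rw [← h₂, ← h₃, h₁, degenExponent_triangle]
      refine pow_dvd_pow X (Nat.add_le_add_left (Nat.one_le_iff_ne_zero.2 (pow_ne_zero 2 ?_)) _)
      rw [Int.natAbs_ne_zero, sub_ne_zero]
      exact_mod_cast hsum
    · exact dvd_zero _

end

theorem mamu_degenerates_to_ghz (k₁ k₂ k₃ g n : ℕ) (hn : #(sumEqSolutions k₁ k₂ k₃ g) = n) :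
    ∃ (A : Matrix (Fin n) (Fin k₁ × Fin k₂) ℂ[X]) (B : Matrix (Fin n) (Fin k₂ × Fin k₃) ℂ[X])
      (Cm : Matrix (Fin n) (Fin k₃ × Fin k₁) ℂ[X]) (d e : ℕ)
      (rem : Fin e → Fin n → Fin n → Fin n → ℂ),
      ∀ r s t, mamuImage A B Cm r s t = X ^ d * C (if r = s ∧ s = t then 1 else 0)
        + ∑ l : Fin e, X ^ (d + (l : ℕ) + 1) * C (rem l r s t) := by
  let σ : Fin n ≃ sumEqSolutions k₁ k₂ k₃ g :=
    (Fintype.equivFinOfCardEq ((Fintype.card_coe _).trans hn)).symm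
  let label r := (σ r).1
  obtain ⟨e, rem, hrem⟩ := exists_eq_X_pow_mul_C_add_sum
    (fun rst : Fin n × Fin n × Fin n =>
      mamuImage (degenA g label) (degenB g label) (degenC g label) rst.1 rst.2.1 rst.2.2)
    (fun rst => if rst.1 = rst.2.1 ∧ rst.2.1 = rst.2.2 then 1 else 0) (2 * g ^ 2)
    fun rst => X_pow_dvd_mamuImage_degen_sub (Subtype.val_injective.comp σ.injective)
      (fun r => (σ r).2) _ _ _
  exact ⟨_, _, _, _, e, fun l r s t => rem l (r, s, t), fun r s t => hrem (r, s, t)⟩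

theorem card_sumEqSolutions_two_two_three : #(sumEqSolutions 2 2 3 5) = 4 := by decide

/-- the diagonal degeneration maps `A(ε)|i,j⟩ = ε^{(i-g)² + 2ij}|i,j⟩`
applied to the triangle of maximally entangled pairs `MaMu(k₁,k₂,k₃)`.
(a) The total exponent collected around the triangle is
`2g² + (i₁+i₂+i₃-g)²`, so the leading order `ε^{2g²}` term is
`∑_{i₁+i₂+i₃=g} |i₁i₂⟩|i₂i₃⟩|i₃i₁⟩`, a GHZ state with a number of levels equal to the
number of solutions of `i₁+i₂+i₃ = g` in `{1,…,k₁}×{1,…,k₂}×{1,…,k₃}`.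
(b) For `(k₁,k₂,k₃) = (2,2,3)` and `g = 5` there are exactly `4` solutions.
(c) Consequently `MaMu(2,2,3) ⊵ GHZ₃(4)`: there exist `ε`-polynomial local maps whose
application to `MaMu(2,2,3)` yields `ε^d · GHZ₃(4)` plus higher-order terms. -/
theorem stmt12 :
    (∀ g i₁ i₂ i₃ : ℤ,
        ((i₁ - g) ^ 2 + 2 * i₁ * i₂) + ((i₂ - g) ^ 2 + 2 * i₂ * i₃)
            + ((i₃ - g) ^ 2 + 2 * i₃ * i₁)
          = 2 * g ^ 2 + (i₁ + i₂ + i₃ - g) ^ 2) ∧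
    ((Finset.univ.filter fun p : Fin 2 × Fin 2 × Fin 3 =>
        ((p.1 : ℕ) + 1) + ((p.2.1 : ℕ) + 1) + ((p.2.2 : ℕ) + 1) = 5).card = 4) ∧
    (∃ (A : Matrix (Fin 4) (Fin 2 × Fin 2) (Polynomial ℂ))
        (B : Matrix (Fin 4) (Fin 2 × Fin 3) (Polynomial ℂ))
        (Cm : Matrix (Fin 4) (Fin 3 × Fin 2) (Polynomial ℂ))
        (d e : ℕ) (rem : Fin e → (Fin 4 → Fin 4 → Fin 4 → ℂ)),
      ∀ r s t : Fin 4,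
        (∑ i₁ : Fin 2, ∑ i₂ : Fin 2, ∑ i₃ : Fin 3,
            A r (i₁, i₂) * B s (i₂, i₃) * Cm t (i₃, i₁))
          = X ^ d * C (if r = s ∧ s = t then 1 else 0)
            + ∑ l : Fin e, X ^ (d + (l : ℕ) + 1) * C (rem l r s t)) :=
  ⟨triangle_exponent_sum, card_sumEqSolutions_two_two_three,
    mamu_degenerates_to_ghz 2 2 3 5 4 card_sumEqSolutions_two_two_three⟩
end

section
/- Upper bound on the bond dimension of GHZ_3(k) from Strassen's degeneration plus interpolation: assuming (a) MaMu_3(n) ⊵ GHZ_3(⌈3n²/4⌉) with error degree at most γn² for a constant γ > 0, (b) a degeneration with error degree e can be converted to the restriction GHZ_3(e+1) ⊗ MaMu_3(n) ≥ (target), and (c) bond(GHZ_3(N)) ≤ 2N for all N, it follows that for every integer α ≥ 1: bond(GHZ_3(⌈3n²/4⌉^α)) ≤ 2αγ n^{α+2}, and hence bond(GHZ_3(k)) ≤ 2γα (4/3)^{1+α/2} k^{1/2 + 1/α} for k of the form (⌈3n²/4⌉)^α. -/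
open Polynomial

/-- `GHZ₃(N)` admits an MPS representation with bond dimension `D`. -/
def ReprGHZ (D N : ℕ) : Prop :=
  ∃ A B C : Fin N → Matrix (Fin D) (Fin D) ℂ,
    ∀ i j k : Fin N, (A i * B j * C k).trace = if i = j ∧ j = k then 1 else 0

/-- The (periodic) MPS bond dimension of `GHZ₃(N)`. -/
noncomputable def bondGHZ (N : ℕ) : ℕ := sInf {D | ReprGHZ D N}

/-- `MaMu₃(n) ⊵ GHZ₃(N)` with error degree at most `e`:  `ε`-polynomial `n×n` MPS
matrices whose traces give `ε^{d₀} δ_{ijk}` plus at most `e` higher-order error terms. -/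
def DegMaMuGHZ (n N e : ℕ) : Prop :=
  ∃ (A B C : Fin N → Matrix (Fin n) (Fin n) (Polynomial ℂ)) (d₀ : ℕ)
    (rem : Fin e → (Fin N → Fin N → Fin N → ℂ)),
    ∀ i j k : Fin N,
      (A i * B j * C k).trace
        = X ^ d₀ * Polynomial.C (if i = j ∧ j = k then (1 : ℂ) else 0)
          + ∑ l : Fin e, X ^ (d₀ + (l : ℕ) + 1) * Polynomial.C (rem l i j k)

/-- `GHZ₃(q) ⊗ MaMu₃(n) ≥ GHZ₃(N)` (restriction by local maps at the three parties). -/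
def RestrGHZMaMu (q n N : ℕ) : Prop :=
  ∃ A B C : Fin N → (Fin q × Fin n × Fin n → ℂ),
    ∀ i j k : Fin N,
      (∑ r : Fin q, ∑ a : Fin n, ∑ b : Fin n, ∑ c : Fin n,
          A i (r, a, b) * B j (r, b, c) * C k (r, c, a))
        = if i = j ∧ j = k then 1 else 0

/-!
Degenerations to `GHZ₃` multiply under Kronecker products, with error degrees adding, so the
`α`-th tensor power of (a) is a degeneration `MaMu₃(n^α) ⊵ GHZ₃(⌈3n²/4⌉^α)` of error degree
`αγn²`. Interpolation (b) turns it into a restriction from `GHZ₃(αγn² + 1) ⊗ MaMu₃(n^α)`, and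
such a restriction is itself an MPS whose matrices are block diagonal, one `n^α × n^α` block per
GHZ level; this gives the bond dimension `(αγn² + 1) n^α ≤ 2αγ n^{α+2}`. The second bound is
the first one rewritten with `n² ≤ (4/3)⌈3n²/4⌉`.
-/

open Matrix Kronecker

theorem Matrix.trace_submatrix_equiv {m k R : Type*} [Fintype m] [Fintype k] [AddCommMonoid R]
    (M : Matrix m m R) (e : k ≃ m) : (M.submatrix e e).trace = M.trace :=
  Fintype.sum_equiv e _ _ fun _ => rfl

theorem Matrix.trace_mul_mul_eq_sum {l m n R : Type*} [Fintype l] [Fintype m] [Fintype n]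
    [NonUnitalNonAssocSemiring R] (A : Matrix l m R) (B : Matrix m n R) (C : Matrix n l R) :
    (A * B * C).trace = ∑ a, ∑ b, ∑ c, A a b * B b c * C c a := by
  simp only [trace, diag, mul_apply, Finset.sum_mul]
  exact Finset.sum_congr rfl fun a _ => Finset.sum_comm

namespace Polynomial

variable {R : Type*} [Semiring R]

theorem eq_C_add_sum_X_pow_mul_C_of_natDegree_le {q : R[X]} {e : ℕ} (h : q.natDegree ≤ e) :
    q = C (q.coeff 0) + ∑ l : Fin e, X ^ ((l : ℕ) + 1) * C (q.coeff (l + 1)) := by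
  conv_lhs => rw [as_sum_range_C_mul_X_pow' q (Nat.lt_succ_of_le h), Finset.sum_range_succ',
    ← Fin.sum_univ_eq_sum_range]
  simp only [pow_zero, mul_one, add_comm (C (q.coeff 0)), X_pow_mul]

theorem natDegree_C_add_sum_X_pow_mul_C_le (c : R) {e : ℕ} (r : Fin e → R) :
    (C c + ∑ l : Fin e, X ^ ((l : ℕ) + 1) * C (r l)).natDegree ≤ e := by
  refine natDegree_add_le_of_degree_le (by simp) (natDegree_sum_le_of_forall_le _ _ fun l _ => ?_)
  rw [X_pow_mul]
  exact (natDegree_C_mul_X_pow_le _ _).trans l.isLt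

end Polynomial

section GHZ

variable {ι ι' : Type*} [DecidableEq ι] [DecidableEq ι'] {R : Type*} [MulZeroOneClass R]

def ghz (i j k : ι) : R := if i = j ∧ j = k then 1 else 0

theorem ghz_prod (i j k : ι) (i' j' k' : ι') :
    (ghz (i, i') (j, j') (k, k') : R) = ghz i j k * ghz i' j' k' := by
  simp only [ghz, Prod.mk.injEq]
  split_ifs <;> simp_all

theorem ghz_apply_injective {f : ι → ι'} (hf : f.Injective) (i j k : ι) :
    (ghz (f i) (f j) (f k) : R) = ghz i j k := by
  simp only [ghz, hf.eq_iff]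

end GHZ

section Degeneration

variable (R : Type*) [CommSemiring R]

/-- `DegMaMuGHZ` for arbitrary index types, with the error terms collected into one polynomial
`Q i j k` of degree at most `e`. -/
def DegenGHZ (κ ι : Type*) [Fintype κ] [DecidableEq ι] (e : ℕ) : Prop :=
  ∃ (A B C : ι → Matrix κ κ R[X]) (d : ℕ) (Q : ι → ι → ι → R[X]), ∀ i j k,
    (A i * B j * C k).trace = X ^ d * Q i j k ∧ (Q i j k).natDegree ≤ e ∧
      (Q i j k).coeff 0 = ghz i j k

variable {R} {κ κ' ι ι' : Type*} [Fintype κ] [Fintype κ'] [DecidableEq ι] [DecidableEq ι']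

theorem degenGHZ_fin_one : DegenGHZ R (Fin 1) (Fin 1) 0 := by
  refine ⟨1, 1, 1, 0, 1, fun i j k => ?_⟩
  simp [ghz, Subsingleton.elim i j, Subsingleton.elim j k]

theorem DegenGHZ.prod {e₁ e₂ : ℕ} (h₁ : DegenGHZ R κ ι e₁) (h₂ : DegenGHZ R κ' ι' e₂) :
    DegenGHZ R (κ × κ') (ι × ι') (e₁ + e₂) := by
  obtain ⟨A₁, B₁, C₁, d₁, Q₁, h₁⟩ := h₁
  obtain ⟨A₂, B₂, C₂, d₂, Q₂, h₂⟩ := h₂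
  refine ⟨fun i => A₁ i.1 ⊗ₖ A₂ i.2, fun j => B₁ j.1 ⊗ₖ B₂ j.2, fun k => C₁ k.1 ⊗ₖ C₂ k.2,
    d₁ + d₂, fun i j k => Q₁ i.1 j.1 k.1 * Q₂ i.2 j.2 k.2, fun i j k => ?_⟩
  obtain ⟨htr₁, hdeg₁, hcoeff₁⟩ := h₁ i.1 j.1 k.1
  obtain ⟨htr₂, hdeg₂, hcoeff₂⟩ := h₂ i.2 j.2 k.2
  refine ⟨?_, natDegree_mul_le.trans (add_le_add hdeg₁ hdeg₂), ?_⟩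
  · rw [← mul_kronecker_mul, ← mul_kronecker_mul, trace_kronecker, htr₁, htr₂, pow_add]
    ring
  · rw [mul_coeff_zero, hcoeff₁, hcoeff₂, ← ghz_prod]

theorem DegenGHZ.congr {e : ℕ} (h : DegenGHZ R κ ι e) (eκ : κ ≃ κ') (eι : ι ≃ ι') :
    DegenGHZ R κ' ι' e := by
  obtain ⟨A, B, C, d, Q, h⟩ := h
  refine ⟨fun i => (A (eι.symm i)).submatrix eκ.symm eκ.symm,
    fun j => (B (eι.symm j)).submatrix eκ.symm eκ.symm,
    fun k => (C (eι.symm k)).submatrix eκ.symm eκ.symm,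
    d, fun i j k => Q (eι.symm i) (eι.symm j) (eι.symm k), fun i j k => ?_⟩
  rw [submatrix_mul_equiv, submatrix_mul_equiv, trace_submatrix_equiv,
    ← ghz_apply_injective eι.symm.injective i j k]
  exact h _ _ _

theorem DegenGHZ.pow {n N e : ℕ} (h : DegenGHZ R (Fin n) (Fin N) e) :
    ∀ α : ℕ, DegenGHZ R (Fin (n ^ α)) (Fin (N ^ α)) (α * e)
  | 0 => by simpa using degenGHZ_fin_one
  | α + 1 => by
    rw [pow_succ, pow_succ, Nat.succ_mul]
    exact ((h.pow α).prod h).congr finProdFinEquiv finProdFinEquiv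

end Degeneration

theorem degenGHZ_iff_degMaMuGHZ {n N e : ℕ} :
    DegenGHZ ℂ (Fin n) (Fin N) e ↔ DegMaMuGHZ n N e := by
  constructor
  · rintro ⟨A, B, C, d, Q, h⟩
    refine ⟨A, B, C, d, fun l i j k => (Q i j k).coeff (l + 1), fun i j k => ?_⟩
    obtain ⟨htr, hdeg, hcoeff⟩ := h i j k
    rw [htr, eq_C_add_sum_X_pow_mul_C_of_natDegree_le hdeg, hcoeff, mul_add, Finset.mul_sum]
    simp only [ghz, ← mul_assoc, ← pow_add, add_assoc]
  · rintro ⟨A, B, C, d, rem, h⟩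
    refine ⟨A, B, C, d,
      fun i j k =>
        Polynomial.C (ghz i j k) + ∑ l : Fin e, X ^ ((l : ℕ) + 1) * Polynomial.C (rem l i j k),
      fun i j k => ⟨?_, natDegree_C_add_sum_X_pow_mul_C_le _ _, by simp⟩⟩
    rw [h i j k, mul_add, Finset.mul_sum]
    simp only [ghz, ← mul_assoc, ← pow_add, add_assoc]

theorem DegMaMuGHZ.pow {n N e : ℕ} (h : DegMaMuGHZ n N e) (α : ℕ) :
    DegMaMuGHZ (n ^ α) (N ^ α) (α * e) :=
  degenGHZ_iff_degMaMuGHZ.mp ((degenGHZ_iff_degMaMuGHZ.mpr h).pow α)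

theorem bondGHZ_le_card {κ : Type*} [Fintype κ] {N : ℕ} (A B C : Fin N → Matrix κ κ ℂ)
    (h : ∀ i j k, (A i * B j * C k).trace = ghz i j k) : bondGHZ N ≤ Fintype.card κ := by
  let e := (Fintype.equivFin κ).symm
  refine Nat.sInf_le ⟨fun i => (A i).submatrix e e, fun j => (B j).submatrix e e,
    fun k => (C k).submatrix e e, fun i j k => ?_⟩
  rw [submatrix_mul_equiv, submatrix_mul_equiv, trace_submatrix_equiv]
  exact h i j k

theorem RestrGHZMaMu.bondGHZ_le {q n N : ℕ} (h : RestrGHZMaMu q n N) : bondGHZ N ≤ q * n := by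
  obtain ⟨A, B, C, h⟩ := h
  let block (F : Fin N → Fin q × Fin n × Fin n → ℂ) (i : Fin N) :
      Matrix (Fin n × Fin q) (Fin n × Fin q) ℂ :=
    blockDiagonal fun r => Matrix.of fun a b => F i (r, a, b)
  refine (bondGHZ_le_card (block A) (block B) (block C) fun i j k => ?_).trans_eq
    (by simp [mul_comm])
  simp only [block, ← blockDiagonal_mul, trace_blockDiagonal, trace_mul_mul_eq_sum, of_apply]
  exact h i j k

theorem pow_le_rpow_of_three_mul_sq_le {x M : ℝ} (hx : 0 ≤ x) (h : 3 * x ^ 2 ≤ 4 * M)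
    {α : ℕ} (hα : α ≠ 0) :
    x ^ (α + 2) ≤ (4 / 3) ^ ((1 : ℝ) + α / 2) * (M ^ α) ^ ((1 : ℝ) / 2 + 1 / α) := by
  have hM : 0 ≤ M := by nlinarith
  have hxt : x ^ (α + 2) = (x ^ 2) ^ ((1 : ℝ) + α / 2) := by
    rw [← Real.rpow_natCast, ← Real.rpow_natCast x 2, ← Real.rpow_mul hx]
    push_cast
    ring_nf
  have hMt : (M ^ α) ^ ((1 : ℝ) / 2 + 1 / α) = M ^ ((1 : ℝ) + α / 2) := by
    rw [← Real.rpow_natCast, ← Real.rpow_mul hM]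
    congr 1
    field_simp
    ring
  rw [hxt, hMt, ← Real.mul_rpow (by norm_num) hM]
  gcongr
  linarith

theorem stmt17_general (γ : ℕ) (hγ : 0 < γ)
    (ha : ∀ n : ℕ, DegMaMuGHZ n ((3 * n ^ 2 + 3) / 4) (γ * n ^ 2))
    (hb : ∀ n N e : ℕ, DegMaMuGHZ n N e → RestrGHZMaMu (e + 1) n N) :
    ∀ α : ℕ, 1 ≤ α → ∀ n : ℕ,
      bondGHZ (((3 * n ^ 2 + 3) / 4) ^ α) ≤ 2 * α * γ * n ^ (α + 2) ∧
      (bondGHZ (((3 * n ^ 2 + 3) / 4) ^ α) : ℝ)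
        ≤ 2 * γ * α * (4 / 3 : ℝ) ^ ((1 : ℝ) + (α : ℝ) / 2)
            * (((((3 * n ^ 2 + 3) / 4) ^ α : ℕ) : ℝ)) ^ ((1 : ℝ) / 2 + 1 / (α : ℝ)) := by
  intro α hα n
  set M := (3 * n ^ 2 + 3) / 4
  have hinterp : bondGHZ (M ^ α) ≤ (α * (γ * n ^ 2) + 1) * n ^ α :=
    (hb _ _ _ ((ha n).pow α)).bondGHZ_le
  have hcount : (α * (γ * n ^ 2) + 1) * n ^ α ≤ 2 * α * γ * n ^ (α + 2) := by
    rcases n.eq_zero_or_pos with rfl | hn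
    · simp [zero_pow (by omega : α ≠ 0)]
    · have : 1 ≤ α * (γ * n ^ 2) := Nat.one_le_iff_ne_zero.mpr (by positivity)
      calc (α * (γ * n ^ 2) + 1) * n ^ α ≤ 2 * (α * (γ * n ^ 2)) * n ^ α := by gcongr; omega
        _ = 2 * α * γ * n ^ (α + 2) := by ring
  have hbond := hinterp.trans hcount
  refine ⟨hbond, ?_⟩
  have hM : 3 * (n : ℝ) ^ 2 ≤ 4 * M := by exact_mod_cast (by omega : 3 * n ^ 2 ≤ 4 * M)
  calc (bondGHZ (M ^ α) : ℝ) ≤ 2 * γ * α * (n : ℝ) ^ (α + 2) := by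
        exact_mod_cast hbond.trans_eq (by ring)
    _ ≤ _ := by
      rw [mul_assoc _ ((4 / 3 : ℝ) ^ _), Nat.cast_pow]
      gcongr
      exact pow_le_rpow_of_three_mul_sq_le n.cast_nonneg hM (by omega)

/-- upper bound on `bond(GHZ₃(k))` from Strassen's degeneration plus
interpolation.  Assume (a) `MaMu₃(n) ⊵ GHZ₃(⌈3n²/4⌉)` with error degree at most `γn²`
for a constant `γ > 0`; (b) any degeneration `MaMu₃(n) ⊵ GHZ₃(N)` with error degree `e`
converts to the restriction `GHZ₃(e+1) ⊗ MaMu₃(n) ≥ GHZ₃(N)`; and (c)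
`bond(GHZ₃(N)) ≤ 2N` for all `N`.  Then for every integer `α ≥ 1` and every `n`:
`bond(GHZ₃(⌈3n²/4⌉^α)) ≤ 2αγ n^{α+2}`, and hence, with `k = ⌈3n²/4⌉^α`,
`bond(GHZ₃(k)) ≤ 2γα (4/3)^{1+α/2} k^{1/2 + 1/α}`. -/
theorem stmt17 (γ : ℕ) (hγ : 0 < γ)
    (ha : ∀ n : ℕ, DegMaMuGHZ n ((3 * n ^ 2 + 3) / 4) (γ * n ^ 2))
    (hb : ∀ n N e : ℕ, DegMaMuGHZ n N e → RestrGHZMaMu (e + 1) n N)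
    (hc : ∀ N : ℕ, bondGHZ N ≤ 2 * N) :
    ∀ α : ℕ, 1 ≤ α → ∀ n : ℕ,
      bondGHZ (((3 * n ^ 2 + 3) / 4) ^ α) ≤ 2 * α * γ * n ^ (α + 2) ∧
      (bondGHZ (((3 * n ^ 2 + 3) / 4) ^ α) : ℝ)
        ≤ 2 * γ * α * (4 / 3 : ℝ) ^ ((1 : ℝ) + (α : ℝ) / 2)
            * (((((3 * n ^ 2 + 3) / 4) ^ α : ℕ) : ℝ)) ^ ((1 : ℝ) / 2 + 1 / (α : ℝ)) :=
  stmt17_general γ hγ ha hb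
end

section
/- If Ψ and Φ are entanglement structures obtained by placing m-partite tensors ψ and φ respectively on F faces of a lattice with L sites, ψ ⊵^e φ, and Φ ≥ T via local maps at the L sites, then there is a polynomial family T(ε) of tensors, each a restriction of Ψ for every ε ≠ 0, with T(ε) = T + ∑_{k=1}^{eF} ε^k T̃_k; consequently T = ∑_{i=0}^{eF} γ_i T(ε_i) for any eF+1 distinct nonzero points ε_i and Lagrange coefficients γ_i = ℓ_i(0), expressing T as a sum of eF+1 tensors each representable by Ψ. -/
open Polynomial

/-- Theorem 1 of the paper.  Let `Ψ = ψ^{⊗F}` and `Φ = φ^{⊗F}` be the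
entanglement structures obtained by placing the `m`-partite tensors `ψ`, `φ` on `F` faces
of a lattice with `L` sites (the party `v` of the copy `f` sits at the lattice site
`site (v, f)`).  Suppose `ψ ⊵^e φ` with approximation degree `d₀` (via `ε`-polynomial
local maps `A_v`, modelled over `Polynomial ℂ`), and `Φ ≥ T` via local maps `B_l` at the
`L` lattice sites.  Then there is a family `S(ε)` of tensors, each a restriction of `Ψ`
(by local maps at the `L` sites) for every `ε ≠ 0`, with
`S(ε) = T + ∑_{k=1}^{eF} ε^k T̃_k`; consequently, for any `eF + 1` pairwise distinct
nonzero nodes `ε_0, …, ε_{eF}`, one has `T = ∑_i γ_i S(ε_i)` with the Lagrange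
coefficients `γ_i = ℓ_i(0)` — expressing `T` as a superposition of `eF + 1` tensors, each
representable by `Ψ`. -/
theorem stmt18 (m F L : ℕ) (din dout : Fin m → ℕ) (dT : Fin L → ℕ)
    (site : Fin m × Fin F → Fin L)
    (ψ : (∀ v, Fin (din v)) → ℂ) (φ : (∀ v, Fin (dout v)) → ℂ)
    (T : (∀ l, Fin (dT l)) → ℂ)
    (d₀ e : ℕ)
    (A : ∀ v : Fin m, Matrix (Fin (dout v)) (Fin (din v)) (Polynomial ℂ))
    (φt : Fin e → ((∀ v, Fin (dout v)) → ℂ))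
    (hdeg : ∀ j : ∀ v, Fin (dout v),
      (∑ i : ∀ v, Fin (din v), (∏ v, A v (j v) (i v)) * C (ψ i))
        = X ^ d₀ * C (φ j) + ∑ l : Fin e, X ^ (d₀ + (l : ℕ) + 1) * C (φt l j))
    (B : ∀ l : Fin L,
      Fin (dT l) → ((∀ p : {p : Fin m × Fin F // site p = l}, Fin (dout p.1.1)) → ℂ))
    (hrep : ∀ t : ∀ l, Fin (dT l),
      (∑ J : ∀ p : Fin m × Fin F, Fin (dout p.1),
          (∏ l, B l (t l) (fun p => J p.1)) * (∏ f, φ (fun v => J (v, f)))) = T t) :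
    ∃ (Tt : Fin (e * F) → ((∀ l, Fin (dT l)) → ℂ))
      (S : ℂ → ((∀ l, Fin (dT l)) → ℂ)),
      (∀ ε : ℂ, ε ≠ 0 →
        ∃ B' : ∀ l : Fin L,
            Fin (dT l) → ((∀ p : {p : Fin m × Fin F // site p = l}, Fin (din p.1.1)) → ℂ),
          ∀ t : ∀ l, Fin (dT l),
            (∑ I : ∀ p : Fin m × Fin F, Fin (din p.1),
                (∏ l, B' l (t l) (fun p => I p.1)) * (∏ f, ψ (fun v => I (v, f))))
              = S ε t) ∧
      (∀ (ε : ℂ) (t : ∀ l, Fin (dT l)),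
        S ε t = T t + ∑ k : Fin (e * F), ε ^ ((k : ℕ) + 1) * Tt k t) ∧
      (∀ eps : Fin (e * F + 1) → ℂ, Function.Injective eps → (∀ i, eps i ≠ 0) →
        ∀ t : ∀ l, Fin (dT l),
          T t = ∑ i : Fin (e * F + 1),
            ((Lagrange.basis Finset.univ eps i).eval 0) * S (eps i) t) := by
  classical
  -- the "per-face" polynomial
  set q : (∀ v, Fin (dout v)) → Polynomial ℂ :=
    fun j => C (φ j) + ∑ l : Fin e, X ^ ((l : ℕ) + 1) * C (φt l j) with hqdef
  have hq : ∀ j, (∑ i : ∀ v, Fin (din v), (∏ v, A v (j v) (i v)) * C (ψ i))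
      = X ^ d₀ * q j := by
    intro j
    rw [hdeg j, hqdef]
    rw [mul_add, Finset.mul_sum]
    congr 1
    refine Finset.sum_congr rfl fun l _ => ?_
    rw [← mul_assoc, ← pow_add, add_assoc]
  -- the polynomial-valued tensor `G`
  set Gp : (∀ l, Fin (dT l)) → Polynomial ℂ :=
    fun t => ∑ J : ∀ p : Fin m × Fin F, Fin (dout p.1),
      (∏ l, C (B l (t l) (fun p => J p.1))) * ∏ f, q (fun v => J (v, f)) with hGp
  have hq0 : ∀ j, (q j).eval 0 = φ j := by
    intro j
    simp [hqdef, eval_finset_sum]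
  have h0 : ∀ t, (Gp t).eval 0 = T t := by
    intro t
    rw [← hrep t, hGp]
    simp [eval_finset_sum, eval_prod, hq0]
  have hdq : ∀ j, (q j).natDegree ≤ e := by
    intro j
    refine (natDegree_add_le _ _).trans (max_le (by simp) ?_)
    refine natDegree_sum_le_of_forall_le _ _ fun l _ => ?_
    refine (natDegree_mul_le).trans ?_
    simp only [natDegree_X_pow, natDegree_C, add_zero]
    exact l.isLt
  have hdG : ∀ t, (Gp t).natDegree ≤ e * F := by
    intro t
    refine natDegree_sum_le_of_forall_le _ _ fun J _ => ?_
    refine (natDegree_mul_le).trans ?_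
    have h1 : (∏ l, C (B l (t l) fun p => J p.1)).natDegree = 0 := by
      rw [← map_prod]; exact natDegree_C _
    rw [h1, zero_add]
    refine (natDegree_prod_le _ _).trans ?_
    calc ∑ _f : Fin F, (q fun v => J (v, _f)).natDegree
        ≤ ∑ _f : Fin F, e := Finset.sum_le_sum fun f _ => hdq _
      _ = e * F := by simp [mul_comm]
  refine ⟨fun k t => (Gp t).coeff ((k : ℕ) + 1), fun ε t => (Gp t).eval ε, ?_, ?_, ?_⟩
  · -- restriction of Ψ for every ε ≠ 0
    intro ε hε
    have hqe : ∀ j : ∀ v, Fin (dout v),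
        (∑ i : ∀ v, Fin (din v), (∏ v, (A v (j v) (i v)).eval ε) * ψ i)
          = ε ^ d₀ * (q j).eval ε := by
      intro j
      have h := congrArg (eval ε) (hq j)
      simpa [eval_finset_sum, eval_prod] using h
    have hGpe : ∀ t, (Gp t).eval ε = ∑ J : ∀ p : Fin m × Fin F, Fin (dout p.1),
        (∏ l, B l (t l) (fun p => J p.1)) * ∏ f, (q fun v => J (v, f)).eval ε := by
      intro t
      rw [hGp]
      simp [eval_finset_sum, eval_prod]
    rcases Nat.eq_zero_or_pos L with hL | hL
    · -- degenerate case: no lattice sites, hence no faces/parties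
      subst hL
      haveI hem : IsEmpty (Fin m × Fin F) := ⟨fun p => (site p).elim0⟩
      refine ⟨fun l => l.elim0, ?_⟩
      intro t
      dsimp only
      simp only [Fin.prod_univ_zero, one_mul]
      rw [Fintype.sum_unique, hGpe t, Fintype.sum_unique]
      simp only [Fin.prod_univ_zero, one_mul]
      rcases Nat.eq_zero_or_pos F with hF | hF
      · subst hF
        simp
      · have hm : m = 0 := by
          by_contra hm
          exact hem.false ⟨⟨0, Nat.pos_of_ne_zero hm⟩, ⟨0, hF⟩⟩
        subst hm
        have hψc : ∀ x : (∀ v : Fin 0, Fin (din v)),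
            ψ x = ψ default := fun x => congrArg ψ (Subsingleton.elim _ _)
        have hqc : ∀ x : (∀ v : Fin 0, Fin (dout v)),
            q x = q default := fun x => congrArg q (Subsingleton.elim _ _)
        have hC : C (ψ default) = X ^ d₀ * q default := by
          have h := hq default
          rwa [Fintype.sum_unique, Fin.prod_univ_zero, one_mul] at h
        have hev : ψ default = ε ^ d₀ * (q default).eval ε := by
          have h := congrArg (eval ε) hC
          simpa using h
        have hev0 : ψ default = 0 ^ d₀ * (q default).eval 0 := by
          have h := congrArg (eval 0) hC
          simpa using h
        calc ∏ f : Fin F, ψ (fun v => (default : ∀ p : Fin 0 × Fin F, Fin (din p.1)) (v, f))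
            = (ψ default) ^ F := by
              rw [Finset.prod_congr rfl fun f _ => hψc _]
              simp
          _ = ∏ f : Fin F, (q fun v =>
                (default : ∀ p : Fin 0 × Fin F, Fin (dout p.1)) (v, f)).eval ε := by
              rw [Finset.prod_congr rfl fun f _ => congrArg (eval ε) (hqc _)]
              rw [Finset.prod_const, Finset.card_univ, Fintype.card_fin]
              rcases Nat.eq_zero_or_pos d₀ with hd | hd
              · subst hd
                rw [hev]; simp
              · have hψ0 : ψ default = 0 := by
                  rw [hev0, zero_pow hd.ne', zero_mul]
                have hqε : (q default).eval ε = 0 := by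
                  have h := hev
                  rw [hψ0] at h
                  exact (mul_eq_zero.mp h.symm).resolve_left (pow_ne_zero _ hε)
                rw [hψ0, hqε]
    · -- main case: `L > 0`
      set l₀ : Fin L := ⟨0, hL⟩ with hl₀
      refine ⟨fun l tl I => (if l = l₀ then (ε ^ (d₀ * F))⁻¹ else 1) *
        ∑ Jl : ∀ p : {p : Fin m × Fin F // site p = l}, Fin (dout p.1.1),
          B l tl Jl * ∏ p : {p : Fin m × Fin F // site p = l},
            (A p.1.1 (Jl p) (I p)).eval ε, ?_⟩
      intro t
      dsimp only
      -- the raw (unnormalised) local maps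
      set raw : ∀ l : Fin L, (∀ p : Fin m × Fin F, Fin (din p.1)) → ℂ :=
        fun l I => ∑ Jl : ∀ p : {p : Fin m × Fin F // site p = l}, Fin (dout p.1.1),
          B l (t l) Jl * ∏ p : {p : Fin m × Fin F // site p = l},
            (A p.1.1 (Jl p) (I p.1)).eval ε with hraw
      have key : (∑ I : ∀ p : Fin m × Fin F, Fin (din p.1),
          (∏ l, raw l I) * ∏ f, ψ (fun v => I (v, f)))
          = ε ^ (d₀ * F) * (Gp t).eval ε := by
        -- the fibre-regrouping equivalence for the `J` indices
        let E1 : (∀ p : Fin m × Fin F, Fin (dout p.1)) ≃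
            (∀ l, ∀ p : {p : Fin m × Fin F // site p = l}, Fin (dout p.1.1)) :=
          { toFun := fun J l p => J p.1
            invFun := fun K p => K (site p) ⟨p, rfl⟩
            left_inv := fun J => rfl
            right_inv := fun K => by
              funext l p
              obtain ⟨p, rfl⟩ := p
              rfl }
        -- the face-regrouping equivalence for the `I` indices
        let E2 : (∀ p : Fin m × Fin F, Fin (din p.1)) ≃
            (∀ f : Fin F, ∀ v : Fin m, Fin (din v)) :=
          { toFun := fun I f v => I (v, f)
            invFun := fun K p => K p.2 p.1
            left_inv := fun I => rfl
            right_inv := fun K => rfl }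
        have step1 : ∀ I : ∀ p : Fin m × Fin F, Fin (din p.1),
            (∏ l, raw l I)
            = ∑ J : ∀ p : Fin m × Fin F, Fin (dout p.1),
                (∏ l, B l (t l) (fun p => J p.1)) *
                ∏ p : Fin m × Fin F, (A p.1 (J p) (I p)).eval ε := by
          intro I
          rw [hraw]
          rw [Fintype.prod_sum]
          rw [← Equiv.sum_comp E1]
          refine Finset.sum_congr rfl fun J _ => ?_
          rw [Finset.prod_mul_distrib]
          congr 1
          exact Fintype.prod_fiberwise site (fun p => (A p.1 (J p) (I p)).eval ε)
        calc (∑ I : ∀ p : Fin m × Fin F, Fin (din p.1),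
              (∏ l, raw l I) * ∏ f, ψ (fun v => I (v, f)))
            = ∑ I : ∀ p : Fin m × Fin F, Fin (din p.1),
                ∑ J : ∀ p : Fin m × Fin F, Fin (dout p.1),
                  (∏ l, B l (t l) (fun p => J p.1)) *
                  ((∏ p : Fin m × Fin F, (A p.1 (J p) (I p)).eval ε) *
                    ∏ f, ψ (fun v => I (v, f))) := by
              refine Finset.sum_congr rfl fun I _ => ?_
              rw [step1 I, Finset.sum_mul]
              exact Finset.sum_congr rfl fun J _ => by ring
          _ = ∑ J : ∀ p : Fin m × Fin F, Fin (dout p.1),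
                (∏ l, B l (t l) (fun p => J p.1)) *
                ∑ I : ∀ p : Fin m × Fin F, Fin (din p.1),
                  (∏ p : Fin m × Fin F, (A p.1 (J p) (I p)).eval ε) *
                    ∏ f, ψ (fun v => I (v, f)) := by
              rw [Finset.sum_comm]
              exact Finset.sum_congr rfl fun J _ => by rw [Finset.mul_sum]
          _ = ∑ J : ∀ p : Fin m × Fin F, Fin (dout p.1),
                (∏ l, B l (t l) (fun p => J p.1)) *
                (ε ^ (d₀ * F) * ∏ f, (q fun v => J (v, f)).eval ε) := by
              refine Finset.sum_congr rfl fun J _ => ?_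
              congr 1
              calc ∑ I : ∀ p : Fin m × Fin F, Fin (din p.1),
                    (∏ p : Fin m × Fin F, (A p.1 (J p) (I p)).eval ε) *
                      ∏ f, ψ (fun v => I (v, f))
                  = ∑ I : ∀ p : Fin m × Fin F, Fin (din p.1),
                      ∏ f, ((∏ v, (A v (J (v, f)) (I (v, f))).eval ε) *
                        ψ (fun v => I (v, f))) := by
                    refine Finset.sum_congr rfl fun I _ => ?_
                    rw [Finset.prod_mul_distrib]
                    congr 1
                    exact Fintype.prod_prod_type_right
                      (fun p => (A p.1 (J p) (I p)).eval ε)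
                _ = ∑ K : ∀ f : Fin F, ∀ v : Fin m, Fin (din v),
                      ∏ f, ((∏ v, (A v (J (v, f)) (K f v)).eval ε) * ψ (K f)) :=
                    Fintype.sum_equiv E2 _ _ (fun I => rfl)
                _ = ∏ f, ∑ i : ∀ v : Fin m, Fin (din v),
                      (∏ v, (A v (J (v, f)) (i v)).eval ε) * ψ i := by
                    rw [Fintype.prod_sum]
                _ = ∏ f : Fin F, (ε ^ d₀ * (q fun v => J (v, f)).eval ε) := by
                    exact Finset.prod_congr rfl fun f _ => hqe _
                _ = ε ^ (d₀ * F) * ∏ f, (q fun v => J (v, f)).eval ε := by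
                    rw [Finset.prod_mul_distrib, Finset.prod_const]
                    simp [← pow_mul]
          _ = ε ^ (d₀ * F) * (Gp t).eval ε := by
              rw [hGpe t, Finset.mul_sum]
              exact Finset.sum_congr rfl fun J _ => by ring
      calc (∑ I : ∀ p : Fin m × Fin F, Fin (din p.1),
            (∏ l, (if l = l₀ then (ε ^ (d₀ * F))⁻¹ else 1) *
              ∑ Jl : ∀ p : {p : Fin m × Fin F // site p = l}, Fin (dout p.1.1),
                B l (t l) Jl * ∏ p : {p : Fin m × Fin F // site p = l},
                  (A p.1.1 (Jl p) ((fun p => I p.1) p)).eval ε) *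
            ∏ f, ψ (fun v => I (v, f)))
          = (ε ^ (d₀ * F))⁻¹ * ∑ I : ∀ p : Fin m × Fin F, Fin (din p.1),
              (∏ l, raw l I) * ∏ f, ψ (fun v => I (v, f)) := by
            rw [Finset.mul_sum]
            refine Finset.sum_congr rfl fun I _ => ?_
            rw [Finset.prod_mul_distrib, Finset.prod_ite_eq' Finset.univ l₀
              (fun _ => (ε ^ (d₀ * F))⁻¹), if_pos (Finset.mem_univ l₀), mul_assoc]
        _ = (Gp t).eval ε := by
            rw [key, ← mul_assoc, inv_mul_cancel₀ (pow_ne_zero _ hε), one_mul]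
  · -- the polynomial expansion of `S`
    intro ε t
    dsimp only
    rw [eval_eq_sum_range' (Nat.lt_succ_of_le (hdG t)), Finset.sum_range_succ']
    simp only [pow_zero, mul_one]
    rw [coeff_zero_eq_eval_zero, h0 t, add_comm]
    congr 1
    rw [Fin.sum_univ_eq_sum_range (fun k => ε ^ (k + 1) * (Gp t).coeff (k + 1))]
    exact Finset.sum_congr rfl fun k _ => (mul_comm _ _)
  · -- Lagrange interpolation at the nodes
    intro eps hinj _hne t
    dsimp only
    have hcard : (Gp t).degree < (Finset.univ : Finset (Fin (e * F + 1))).card := by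
      rw [Finset.card_univ, Fintype.card_fin]
      exact lt_of_le_of_lt (degree_le_natDegree.trans (Nat.cast_le.mpr (hdG t)))
        (Nat.cast_lt.mpr (Nat.lt_succ_self _))
    have hInj : Set.InjOn eps ↑(Finset.univ : Finset (Fin (e * F + 1))) :=
      fun a _ b _ h => hinj h
    have hint := Lagrange.eq_interpolate (v := eps) hInj hcard
    rw [← h0 t]
    conv_lhs => rw [hint]
    rw [Lagrange.interpolate_apply, eval_finset_sum]
    refine Finset.sum_congr rfl fun i _ => ?_
    rw [eval_mul, eval_C, mul_comm]
end
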